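/- arXiv:1303.3421 — 6 statements merged into one kernel-verified Lean document; each statement's English description precedes it below -/
import Mathlib

section
/- A Skolem sequence of order n exists if and only if n ≡ 0 or 1 (mod 4). -/
/-- A Skolem sequence of order `n` in pair form: a partition of `{1,...,2n}` into
pairs `(a i, b i)`, `1 ≤ i ≤ n`, with `b i - a i = i`. -/
def IsSkolem (n : ℕ) (a b : ℕ → ℕ) : Prop :=
  (∀ i, 1 ≤ i → i ≤ n → a i + i = b i) ∧
  (∀ x, (1 ≤ x ∧ x ≤ 2 * n) ↔ ∃ i, 1 ≤ i ∧ i ≤ n ∧ (x = a i ∨ x = b i)) ∧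
  (∀ i j, 1 ≤ i → i ≤ n → 1 ≤ j → j ≤ n → i ≠ j →
    a i ≠ a j ∧ a i ≠ b j ∧ b i ≠ a j ∧ b i ≠ b j)

private lemma skolem_gauss (k : ℕ) : 2 * ∑ i ∈ Finset.Icc 1 k, i = k * (k + 1) := by
  induction k with
  | zero => simp
  | succ k ih =>
    rw [Finset.sum_Icc_succ_top (by omega)]
    have : (k + 1) * (k + 1 + 1) = k * (k + 1) + 2 * (k + 1) := by ring
    omega

/-- Build a Skolem sequence from a map `a` with the injectivity and bound conditions;
coverage follows by counting. -/
private lemma isSkolem_mk (n : ℕ) (a : ℕ → ℕ)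
    (hb : ∀ i, 1 ≤ i → i ≤ n → 1 ≤ a i ∧ a i + i ≤ 2 * n)
    (hd : ∀ i j, 1 ≤ i → i ≤ n → 1 ≤ j → j ≤ n → i ≠ j →
      a i ≠ a j ∧ a i ≠ a j + j ∧ a i + i ≠ a j ∧ a i + i ≠ a j + j) :
    IsSkolem n a (fun i => a i + i) := by
  refine ⟨fun i _ _ => rfl, ?_, fun i j h1 h2 h3 h4 h5 => hd i j h1 h2 h3 h4 h5⟩
  classical
  set A : Finset ℕ := (Finset.Icc 1 n).image a with hA
  set B : Finset ℕ := (Finset.Icc 1 n).image (fun i => a i + i) with hB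
  have hInjA : Set.InjOn a (Finset.Icc 1 n) := by
    intro i hi j hj hij
    simp only [Finset.coe_Icc, Set.mem_Icc] at hi hj
    by_contra hne
    exact (hd i j hi.1 hi.2 hj.1 hj.2 hne).1 hij
  have hInjB : Set.InjOn (fun i => a i + i) (Finset.Icc 1 n) := by
    intro i hi j hj hij
    simp only [Finset.coe_Icc, Set.mem_Icc] at hi hj
    by_contra hne
    exact (hd i j hi.1 hi.2 hj.1 hj.2 hne).2.2.2 hij
  have hdisj : Disjoint A B := by
    rw [Finset.disjoint_left]
    rintro x hx hx'
    obtain ⟨i, hi, rfl⟩ := Finset.mem_image.1 hx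
    obtain ⟨j, hj, hji⟩ := Finset.mem_image.1 hx'
    simp only [Finset.mem_Icc] at hi hj
    rcases eq_or_ne i j with rfl | hne
    · have hji' : a i + i = a i := hji
      omega
    · have hji' : a j + j = a i := hji
      exact (hd i j hi.1 hi.2 hj.1 hj.2 hne).2.1 hji'.symm
  have hsub : A ∪ B ⊆ Finset.Icc 1 (2 * n) := by
    intro x hx
    rcases Finset.mem_union.1 hx with h | h <;>
      obtain ⟨i, hi, rfl⟩ := Finset.mem_image.1 h <;>
      simp only [Finset.mem_Icc] at hi ⊢ <;>
      have := hb i hi.1 hi.2 <;> omega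
  have hcard : (A ∪ B).card = 2 * n := by
    rw [Finset.card_union_of_disjoint hdisj, hA, hB,
      Finset.card_image_of_injOn hInjA, Finset.card_image_of_injOn hInjB,
      Nat.card_Icc]
    omega
  have heq : A ∪ B = Finset.Icc 1 (2 * n) := by
    apply Finset.eq_of_subset_of_card_le hsub
    rw [hcard, Nat.card_Icc]
    omega
  intro x
  constructor
  · intro hx
    have hxm : x ∈ A ∪ B := by
      rw [heq, Finset.mem_Icc]; omega
    rcases Finset.mem_union.1 hxm with h | h <;>
      obtain ⟨i, hi, rfl⟩ := Finset.mem_image.1 h <;>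
      simp only [Finset.mem_Icc] at hi
    · exact ⟨i, hi.1, hi.2, Or.inl rfl⟩
    · exact ⟨i, hi.1, hi.2, Or.inr rfl⟩
  · rintro ⟨i, h1, h2, h3 | h3⟩ <;> have hbi := hb i h1 h2
    · omega
    · have h3' : x = a i + i := h3
      omega

/-- Necessity: no Skolem sequence when `n ≡ 2, 3 (mod 4)`. -/
private lemma skolem_necessary (n : ℕ) (a b : ℕ → ℕ) (h : IsSkolem n a b) :
    n % 4 = 0 ∨ n % 4 = 1 := by
  classical
  obtain ⟨h1, h2, h3⟩ := h
  set A : Finset ℕ := (Finset.Icc 1 n).image a with hA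
  set B : Finset ℕ := (Finset.Icc 1 n).image b with hB
  have hInjA : Set.InjOn a (Finset.Icc 1 n) := by
    intro i hi j hj hij
    simp only [Finset.coe_Icc, Set.mem_Icc] at hi hj
    by_contra hne
    exact (h3 i j hi.1 hi.2 hj.1 hj.2 hne).1 hij
  have hInjB : Set.InjOn b (Finset.Icc 1 n) := by
    intro i hi j hj hij
    simp only [Finset.coe_Icc, Set.mem_Icc] at hi hj
    by_contra hne
    exact (h3 i j hi.1 hi.2 hj.1 hj.2 hne).2.2.2 hij
  have hdisj : Disjoint A B := by
    rw [Finset.disjoint_left]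
    rintro x hx hx'
    obtain ⟨i, hi, rfl⟩ := Finset.mem_image.1 hx
    obtain ⟨j, hj, hji⟩ := Finset.mem_image.1 hx'
    simp only [Finset.mem_Icc] at hi hj
    rcases eq_or_ne i j with rfl | hne
    · have := h1 i hi.1 hi.2; omega
    · exact (h3 i j hi.1 hi.2 hj.1 hj.2 hne).2.1 hji.symm
  have heq : A ∪ B = Finset.Icc 1 (2 * n) := by
    ext x
    simp only [Finset.mem_union, hA, hB, Finset.mem_image, Finset.mem_Icc]
    rw [h2 x]
    constructor
    · rintro (⟨i, hi, rfl⟩ | ⟨i, hi, rfl⟩)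
      · exact ⟨i, hi.1, hi.2, Or.inl rfl⟩
      · exact ⟨i, hi.1, hi.2, Or.inr rfl⟩
    · rintro ⟨i, hi1, hi2, rfl | rfl⟩
      · exact Or.inl ⟨i, ⟨hi1, hi2⟩, rfl⟩
      · exact Or.inr ⟨i, ⟨hi1, hi2⟩, rfl⟩
  have hsum : (∑ x ∈ Finset.Icc 1 (2 * n), x)
      = (∑ i ∈ Finset.Icc 1 n, a i) + ∑ i ∈ Finset.Icc 1 n, b i := by
    rw [← heq, Finset.sum_union hdisj, hA, hB,
      Finset.sum_image (fun x hx y hy => hInjA hx hy),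
      Finset.sum_image (fun x hx y hy => hInjB hx hy)]
  have hbsum : (∑ i ∈ Finset.Icc 1 n, b i)
      = (∑ i ∈ Finset.Icc 1 n, a i) + ∑ i ∈ Finset.Icc 1 n, i := by
    rw [← Finset.sum_add_distrib]
    apply Finset.sum_congr rfl
    intro i hi
    simp only [Finset.mem_Icc] at hi
    have := h1 i hi.1 hi.2
    omega
  have g1 := skolem_gauss (2 * n)
  have g2 := skolem_gauss n
  -- 4 * ΣA = n * (3n+1)
  have key : 4 * (∑ i ∈ Finset.Icc 1 n, a i) = n * (3 * n + 1) := by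
    have e : 2 * ((∑ i ∈ Finset.Icc 1 n, a i) + ∑ i ∈ Finset.Icc 1 n, b i)
        = 2 * n * (2 * n + 1) := by rw [← hsum]; omega
    have : (2 : ℕ) * n * (2 * n + 1) = 4 * (n * n) + 2 * n := by ring
    have : n * (3 * n + 1) = 3 * (n * n) + n := by ring
    nlinarith [hbsum, g2]
  by_contra hc
  push_neg at hc
  have h4 : n % 4 = 2 ∨ n % 4 = 3 := by omega
  rcases h4 with h4 | h4
  · obtain ⟨k, rfl⟩ : ∃ k, n = 4 * k + 2 := ⟨n / 4, by omega⟩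
    have : (4 * k + 2) * (3 * (4 * k + 2) + 1) = 4 * (12 * k * k + 13 * k + 3) + 2 := by
      ring
    omega
  · obtain ⟨k, rfl⟩ : ∃ k, n = 4 * k + 3 := ⟨n / 4, by omega⟩
    have : (4 * k + 3) * (3 * (4 * k + 3) + 1) = 4 * (12 * k * k + 19 * k + 7) + 2 := by
      ring
    omega

/-- The `a`-map of the construction for `n = 4m`, `m ≥ 2`. -/
private def skA0 (m i : ℕ) : ℕ :=
  if i % 2 = 0 then
    (if i = 2 * m then 5 * m else 6 * m - i / 2)
  else if i = 4 * m - 1 then 2 * m + 1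
  else if 2 * m + 1 ≤ i then (4 * m - 1 - i) / 2
  else if i = 2 * m - 1 then 2 * m
  else if i = 1 then m
  else m + 1 + (2 * m - 1 - i) / 2

/-- The `a`-map of the construction for `n = 4m+1`, `m ≥ 2`. -/
private def skA1 (m i : ℕ) : ℕ :=
  if i % 2 = 0 then 6 * m + 2 - i / 2
  else if i = 4 * m + 1 then 2 * m + 1
  else if 2 * m + 1 ≤ i then (4 * m + 1 - i) / 2
  else if i = 2 * m - 1 then 2 * m + 2
  else if i = 1 then m + 1
  else m + 2 + (2 * m - 1 - i) / 2

set_option maxHeartbeats 4000000 in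
private lemma skolem_four_mul (m : ℕ) (hm : 2 ≤ m) :
    ∃ a b : ℕ → ℕ, IsSkolem (4 * m) a b := by
  refine ⟨skA0 m, _, isSkolem_mk (4 * m) (skA0 m) ?_ ?_⟩
  · intro i hi1 hi2
    simp only [skA0]
    split_ifs <;> omega
  · intro i j hi1 hi2 hj1 hj2 hne
    simp only [skA0]
    split_ifs <;> omega

set_option maxHeartbeats 4000000 in
private lemma skolem_four_mul_add_one (m : ℕ) (hm : 2 ≤ m) :
    ∃ a b : ℕ → ℕ, IsSkolem (4 * m + 1) a b := by
  refine ⟨skA1 m, _, isSkolem_mk (4 * m + 1) (skA1 m) ?_ ?_⟩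
  · intro i hi1 hi2
    simp only [skA1]
    split_ifs <;> omega
  · intro i j hi1 hi2 hj1 hj2 hne
    simp only [skA1]
    split_ifs <;> omega

/-- The `a`-map for `n = 4`. -/
private def skA4 (i : ℕ) : ℕ :=
  if i = 1 then 7 else if i = 2 then 2 else if i = 3 then 3 else 1

/-- The `a`-map for `n = 5`. -/
private def skA5 (i : ℕ) : ℕ :=
  if i = 1 then 1 else if i = 2 then 7 else if i = 3 then 3 else if i = 4 then 4 else 5

/-- A Skolem sequence of order `n` exists if and only if `n ≡ 0, 1 (mod 4)`. -/
theorem skolem_exists_iff (n : ℕ) :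
    (∃ a b : ℕ → ℕ, IsSkolem n a b) ↔ n % 4 = 0 ∨ n % 4 = 1 := by
  constructor
  · rintro ⟨a, b, h⟩
    exact skolem_necessary n a b h
  · intro h
    rcases eq_or_ne n 0 with rfl | hn0
    · exact ⟨skA4, _, isSkolem_mk 0 skA4 (fun i h1 h2 => absurd h2 (by omega))
        (fun i j h1 h2 => absurd h2 (by omega))⟩
    rcases eq_or_ne n 1 with rfl | hn1
    · refine ⟨skA5, _, isSkolem_mk 1 skA5 ?_ ?_⟩
      · intro i h1 h2
        simp only [skA5]
        split_ifs <;> omega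
      · intro i j h1 h2 h3 h4 h5
        omega
    rcases eq_or_ne n 4 with rfl | hn4
    · refine ⟨skA4, _, isSkolem_mk 4 skA4 ?_ ?_⟩
      · intro i h1 h2
        simp only [skA4]
        split_ifs <;> omega
      · intro i j h1 h2 h3 h4 h5
        simp only [skA4]
        split_ifs <;> omega
    rcases eq_or_ne n 5 with rfl | hn5
    · refine ⟨skA5, _, isSkolem_mk 5 skA5 ?_ ?_⟩
      · intro i h1 h2
        simp only [skA5]
        split_ifs <;> omega
      · intro i j h1 h2 h3 h4 h5
        simp only [skA5]
        split_ifs <;> omega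
    rcases h with h | h
    · obtain ⟨m, rfl⟩ : ∃ m, n = 4 * m := ⟨n / 4, by omega⟩
      exact skolem_four_mul m (by omega)
    · obtain ⟨m, rfl⟩ : ∃ m, n = 4 * m + 1 := ⟨n / 4, by omega⟩
      exact skolem_four_mul_add_one m (by omega)
end

section
/- Two Skolem sequences of order n cannot have exactly n-2 pairs in common. (If they agreed on all but two differences a < b, the four remaining positions s_1 < s_2 < s_3 < s_4 would force a midpoint position to be used twice, a contradiction.) -/
/-- If all indices other than `i, j` agree between the two sequences, then any position
used by the primed sequence at index `m ∈ {i, j}` must be used by the unprimed sequence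
at index `i` or `j`. -/
lemma skolem_pos_mem (n : ℕ) (a b a' b' : ℕ → ℕ)
    (h : IsSkolem n a b) (h' : IsSkolem n a' b')
    (i j : ℕ) (hi1 : 1 ≤ i) (hin : i ≤ n) (hj1 : 1 ≤ j) (hjn : j ≤ n)
    (hagree : ∀ k, 1 ≤ k → k ≤ n → k ≠ i → k ≠ j → a k = a' k ∧ b k = b' k)
    (m : ℕ) (hm : m = i ∨ m = j) (x : ℕ) (hx : x = a' m ∨ x = b' m) :
    x = a i ∨ x = b i ∨ x = a j ∨ x = b j := by
  have hm1 : 1 ≤ m := by rcases hm with rfl | rfl <;> assumption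
  have hmn : m ≤ n := by rcases hm with rfl | rfl <;> assumption
  have hx2 : 1 ≤ x ∧ x ≤ 2 * n := (h'.2.1 x).mpr ⟨m, hm1, hmn, hx⟩
  obtain ⟨k, hk1, hkn, hk⟩ := (h.2.1 x).mp hx2
  by_cases hki : k = i
  · subst hki; tauto
  by_cases hkj : k = j
  · subst hkj; tauto
  · exfalso
    obtain ⟨ha, hb⟩ := hagree k hk1 hkn hki hkj
    have hkm : k ≠ m := by rcases hm with rfl | rfl <;> assumption
    have hd := h'.2.2 k m hk1 hkn hm1 hmn hkm
    rcases hk with rfl | rfl <;> rcases hx with h1 | h1 <;>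
      simp_all

/-- Two Skolem sequences of order `n` cannot have exactly `n - 2` pairs in common. -/
theorem skolem_not_n_sub_two_common (n : ℕ) (hn : 2 ≤ n) (a b a' b' : ℕ → ℕ)
    (h : IsSkolem n a b) (h' : IsSkolem n a' b') :
    ((Finset.Icc 1 n).filter (fun i => a i = a' i ∧ b i = b' i)).card ≠ n - 2 := by
  intro hcard
  set S := (Finset.Icc 1 n).filter (fun i => a i = a' i ∧ b i = b' i) with hSdef
  set T := Finset.Icc 1 n \ S with hTdef
  have hScard : S.card ≤ n := by
    calc S.card ≤ (Finset.Icc 1 n).card := Finset.card_le_card (Finset.filter_subset _ _)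
    _ = n := by rw [Nat.card_Icc]; omega
  have hTcard : T.card = 2 := by
    rw [hTdef, Finset.card_sdiff_of_subset (Finset.filter_subset _ _), Nat.card_Icc, hcard]
    omega
  obtain ⟨i, j, hij, hT⟩ := Finset.card_eq_two.mp hTcard
  have hiT : i ∈ T := by rw [hT]; simp
  have hjT : j ∈ T := by rw [hT]; simp
  rw [hTdef, Finset.mem_sdiff, Finset.mem_Icc, hSdef, Finset.mem_filter] at hiT hjT
  have hi1 : 1 ≤ i := hiT.1.1
  have hin : i ≤ n := hiT.1.2
  have hj1 : 1 ≤ j := hjT.1.1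
  have hjn : j ≤ n := hjT.1.2
  have hagree : ∀ k, 1 ≤ k → k ≤ n → k ≠ i → k ≠ j → a k = a' k ∧ b k = b' k := by
    intro k hk1 hkn hki hkj
    have hkT : k ∉ T := by rw [hT]; simp [hki, hkj]
    rw [hTdef, Finset.mem_sdiff] at hkT
    push_neg at hkT
    have := hkT (Finset.mem_Icc.mpr ⟨hk1, hkn⟩)
    rw [hSdef, Finset.mem_filter] at this
    exact this.2
  -- basic equations
  have ebi : a i + i = b i := h.1 i hi1 hin
  have ebj : a j + j = b j := h.1 j hj1 hjn
  have ebi' : a' i + i = b' i := h'.1 i hi1 hin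
  have ebj' : a' j + j = b' j := h'.1 j hj1 hjn
  -- disagreement at i and j
  have hnei : a i ≠ a' i := by
    intro heq
    exact hiT.2 ⟨Finset.mem_Icc.mpr ⟨hi1, hin⟩, heq, by omega⟩
  have hnej : a j ≠ a' j := by
    intro heq
    exact hjT.2 ⟨Finset.mem_Icc.mpr ⟨hj1, hjn⟩, heq, by omega⟩
  -- memberships of primed positions in unprimed 4-set
  have m1 := skolem_pos_mem n a b a' b' h h' i j hi1 hin hj1 hjn hagree i (Or.inl rfl)
      (a' i) (Or.inl rfl)
  have m2 := skolem_pos_mem n a b a' b' h h' i j hi1 hin hj1 hjn hagree i (Or.inl rfl)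
      (b' i) (Or.inr rfl)
  have m3 := skolem_pos_mem n a b a' b' h h' i j hi1 hin hj1 hjn hagree j (Or.inr rfl)
      (a' j) (Or.inl rfl)
  have m4 := skolem_pos_mem n a b a' b' h h' i j hi1 hin hj1 hjn hagree j (Or.inr rfl)
      (b' j) (Or.inr rfl)
  -- distinctness within each sequence
  obtain ⟨d1, d2, d3, d4⟩ := h.2.2 i j hi1 hin hj1 hjn hij
  obtain ⟨d1', d2', d3', d4'⟩ := h'.2.2 i j hi1 hin hj1 hjn hij
  omega
end

section
/- Suppose positions s_1 < s_2 < s_3 < s_4 and differences a ≠ b satisfy: in one partition, a is realized by a pair from {s_1,s_2,s_3,s_4} and b by the complementary pair, and in another partition the same holds with the pairs disjoint from the first partition's pairs. Then a = s_i - s_1 = s_4 - s_i and b = s_j - s_1 = s_4 - s_j for some i ≠ j in {2,3}, which forces s_i = s_j = (s_1 + s_4)/2, a contradiction; hence no such configuration exists. -/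
lemma pairing_cases (s1 s2 s3 s4 a b x1 y1 x2 y2 : ℕ)
    (h12 : s1 < s2) (h23 : s2 < s3) (h34 : s3 < s4)
    (hP1 : y1 = x1 + a) (hP2 : y2 = x2 + b)
    (hPset : ({x1, y1, x2, y2} : Finset ℕ) = {s1, s2, s3, s4}) :
    (x1 = s1 ∧ y1 = s2 ∧ x2 = s3 ∧ y2 = s4) ∨
    (x1 = s1 ∧ y1 = s3 ∧ x2 = s2 ∧ y2 = s4) ∨
    (x1 = s1 ∧ y1 = s4 ∧ x2 = s2 ∧ y2 = s3) ∨
    (x2 = s1 ∧ y2 = s2 ∧ x1 = s3 ∧ y1 = s4) ∨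
    (x2 = s1 ∧ y2 = s3 ∧ x1 = s2 ∧ y1 = s4) ∨
    (x2 = s1 ∧ y2 = s4 ∧ x1 = s2 ∧ y1 = s3) := by
  have hcard : ({x1, y1, x2, y2} : Finset ℕ).card = 4 := by
    rw [hPset]
    rw [Finset.card_insert_of_notMem (by simp; omega),
        Finset.card_insert_of_notMem (by simp; omega),
        Finset.card_insert_of_notMem (by simp; omega)]
    rfl
  have hd : x1 ≠ y1 ∧ x1 ≠ x2 ∧ x1 ≠ y2 ∧ y1 ≠ x2 ∧ y1 ≠ y2 ∧ x2 ≠ y2 := by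
    by_contra h
    push_neg at h
    have hle : ({x1, y1, x2, y2} : Finset ℕ).card ≤ 3 := by
      rcases Decidable.em (x1 = y1) with h1 | h1
      · have : ({x1, y1, x2, y2} : Finset ℕ) = {y1, x2, y2} := by
          subst h1; simp
        rw [this]; exact Finset.card_le_three ..
      rcases Decidable.em (x1 = x2) with h2 | h2
      · have : ({x1, y1, x2, y2} : Finset ℕ) = {x2, y1, y2} := by
          subst h2; ext z
          simp only [Finset.mem_insert, Finset.mem_singleton]; tauto
        rw [this]; exact Finset.card_le_three ..
      rcases Decidable.em (x1 = y2) with h3 | h3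
      · have : ({x1, y1, x2, y2} : Finset ℕ) = {y2, y1, x2} := by
          subst h3; ext z
          simp only [Finset.mem_insert, Finset.mem_singleton]; tauto
        rw [this]; exact Finset.card_le_three ..
      rcases Decidable.em (y1 = x2) with h4 | h4
      · have : ({x1, y1, x2, y2} : Finset ℕ) = {x1, x2, y2} := by
          subst h4; ext z
          simp only [Finset.mem_insert, Finset.mem_singleton]; tauto
        rw [this]; exact Finset.card_le_three ..
      rcases Decidable.em (y1 = y2) with h5 | h5
      · have : ({x1, y1, x2, y2} : Finset ℕ) = {x1, y2, x2} := by
          subst h5; ext z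
          simp only [Finset.mem_insert, Finset.mem_singleton]; tauto
        rw [this]; exact Finset.card_le_three ..
      have h6 := h h1 h2 h3 h4 h5
      have : ({x1, y1, x2, y2} : Finset ℕ) = {x1, y1, y2} := by
        subst h6; ext z
        simp only [Finset.mem_insert, Finset.mem_singleton]; tauto
      rw [this]; exact Finset.card_le_three ..
    omega
  obtain ⟨n1, n2, n3, n4, n5, n6⟩ := hd
  have mem : ∀ z : ℕ, z ∈ ({s1, s2, s3, s4} : Finset ℕ) ↔
      (z = s1 ∨ z = s2 ∨ z = s3 ∨ z = s4) := by
    intro z; simp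
  have m1 := (mem x1).mp (hPset ▸ (by simp : x1 ∈ ({x1, y1, x2, y2} : Finset ℕ)))
  have m2 := (mem y1).mp (hPset ▸ (by simp : y1 ∈ ({x1, y1, x2, y2} : Finset ℕ)))
  have m3 := (mem x2).mp (hPset ▸ (by simp : x2 ∈ ({x1, y1, x2, y2} : Finset ℕ)))
  have m4 := (mem y2).mp (hPset ▸ (by simp : y2 ∈ ({x1, y1, x2, y2} : Finset ℕ)))
  have r1 : s1 = x1 ∨ s1 = y1 ∨ s1 = x2 ∨ s1 = y2 := by
    have : s1 ∈ ({x1, y1, x2, y2} : Finset ℕ) := by rw [hPset]; simp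
    simpa using this
  have r2 : s2 = x1 ∨ s2 = y1 ∨ s2 = x2 ∨ s2 = y2 := by
    have : s2 ∈ ({x1, y1, x2, y2} : Finset ℕ) := by rw [hPset]; simp
    simpa using this
  have r3 : s3 = x1 ∨ s3 = y1 ∨ s3 = x2 ∨ s3 = y2 := by
    have : s3 ∈ ({x1, y1, x2, y2} : Finset ℕ) := by rw [hPset]; simp
    simpa using this
  have r4 : s4 = x1 ∨ s4 = y1 ∨ s4 = x2 ∨ s4 = y2 := by
    have : s4 ∈ ({x1, y1, x2, y2} : Finset ℕ) := by rw [hPset]; simp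
    simpa using this
  clear hPset mem hcard
  have hx : x1 = s1 ∨ x2 = s1 := by omega
  rcases hx with hx | hx
  · have hy : y1 = s4 ∨ y2 = s4 := by omega
    rcases hy with hy | hy
    · have h : x2 = s2 ∧ y2 = s3 := by omega
      exact Or.inr (Or.inr (Or.inl ⟨hx, hy, h.1, h.2⟩))
    · have h : (y1 = s2 ∧ x2 = s3) ∨ (y1 = s3 ∧ x2 = s2) := by omega
      rcases h with ⟨h1, h2⟩ | ⟨h1, h2⟩
      · exact Or.inl ⟨hx, h1, h2, hy⟩
      · exact Or.inr (Or.inl ⟨hx, h1, h2, hy⟩)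
  · have hy : y1 = s4 ∨ y2 = s4 := by omega
    rcases hy with hy | hy
    · have h : (x1 = s2 ∧ y2 = s3) ∨ (x1 = s3 ∧ y2 = s2) := by omega
      rcases h with ⟨h1, h2⟩ | ⟨h1, h2⟩
      · exact Or.inr (Or.inr (Or.inr (Or.inr (Or.inl ⟨hx, h2, h1, hy⟩))))
      · exact Or.inr (Or.inr (Or.inr (Or.inl ⟨hx, h2, h1, hy⟩)))
    · have h : x1 = s2 ∧ y1 = s3 := by omega
      exact Or.inr (Or.inr (Or.inr (Or.inr (Or.inr ⟨hx, hy, h.1, h.2⟩))))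

/-- Four positions `s₁ < s₂ < s₃ < s₄` cannot be partitioned in two pair-disjoint
ways into two pairs realizing the two distinct differences `a` and `b`. -/
theorem no_disjoint_double_pairing (s1 s2 s3 s4 a b : ℕ)
    (h12 : s1 < s2) (h23 : s2 < s3) (h34 : s3 < s4) (hab : a ≠ b)
    (x1 y1 x2 y2 u1 v1 u2 v2 : ℕ)
    (hP1 : y1 = x1 + a) (hP2 : y2 = x2 + b)
    (hPset : ({x1, y1, x2, y2} : Finset ℕ) = {s1, s2, s3, s4})
    (hQ1 : v1 = u1 + a) (hQ2 : v2 = u2 + b)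
    (hQset : ({u1, v1, u2, v2} : Finset ℕ) = {s1, s2, s3, s4})
    (hd1 : (u1, v1) ≠ (x1, y1)) (hd2 : (u1, v1) ≠ (x2, y2))
    (hd3 : (u2, v2) ≠ (x1, y1)) (hd4 : (u2, v2) ≠ (x2, y2)) :
    False := by
  have hP := pairing_cases s1 s2 s3 s4 a b x1 y1 x2 y2 h12 h23 h34 hP1 hP2 hPset
  have hQ := pairing_cases s1 s2 s3 s4 a b u1 v1 u2 v2 h12 h23 h34 hQ1 hQ2 hQset
  have d1 : ¬(u1 = x1 ∧ v1 = y1) := fun ⟨h, h'⟩ => hd1 (by rw [h, h'])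
  have d2 : ¬(u1 = x2 ∧ v1 = y2) := fun ⟨h, h'⟩ => hd2 (by rw [h, h'])
  have d3 : ¬(u2 = x1 ∧ v2 = y1) := fun ⟨h, h'⟩ => hd3 (by rw [h, h'])
  have d4 : ¬(u2 = x2 ∧ v2 = y2) := fun ⟨h, h'⟩ => hd4 (by rw [h, h'])
  rcases hP with ⟨e1,e2,e3,e4⟩|⟨e1,e2,e3,e4⟩|⟨e1,e2,e3,e4⟩|⟨e1,e2,e3,e4⟩|⟨e1,e2,e3,e4⟩|⟨e1,e2,e3,e4⟩ <;>
    rcases hQ with ⟨f1,f2,f3,f4⟩|⟨f1,f2,f3,f4⟩|⟨f1,f2,f3,f4⟩|⟨f1,f2,f3,f4⟩|⟨f1,f2,f3,f4⟩|⟨f1,f2,f3,f4⟩ <;>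
    omega
end

section
/- A hooked Skolem sequence of order n exists if and only if n ≡ 2 or 3 (mod 4). -/
/-- A hooked Skolem sequence of order `n` in pair form: a partition of
`{1,...,2n-1} ∪ {2n+1}` into pairs `(a i, b i)`, `1 ≤ i ≤ n`, with `b i - a i = i`. -/
def IsHookedSkolem (n : ℕ) (a b : ℕ → ℕ) : Prop :=
  (∀ i, 1 ≤ i → i ≤ n → a i + i = b i) ∧
  (∀ x, (1 ≤ x ∧ x ≤ 2 * n + 1 ∧ x ≠ 2 * n) ↔ ∃ i, 1 ≤ i ∧ i ≤ n ∧ (x = a i ∨ x = b i)) ∧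
  (∀ i j, 1 ≤ i → i ≤ n → 1 ≤ j → j ≤ n → i ≠ j →
    a i ≠ a j ∧ a i ≠ b j ∧ b i ≠ a j ∧ b i ≠ b j)

private lemma gaussIcc (n : ℕ) : 2 * ∑ i ∈ Finset.Icc 1 n, i = n * (n + 1) := by
  induction n with
  | zero => simp
  | succ k ih =>
    rw [Finset.sum_Icc_succ_top (by omega), Nat.mul_add, ih]
    ring

/-- Builder: ranges plus injectivity suffice. -/
private lemma hookedSkolem_of (n : ℕ) (hn : 1 ≤ n) (a : ℕ → ℕ)
    (hrange : ∀ i, 1 ≤ i → i ≤ n →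
      1 ≤ a i ∧ a i + i ≤ 2 * n + 1 ∧ a i ≠ 2 * n ∧ a i + i ≠ 2 * n)
    (hinj : ∀ i j, 1 ≤ i → i ≤ n → 1 ≤ j → j ≤ n → i ≠ j →
      a i ≠ a j ∧ a i ≠ a j + j ∧ a i + i ≠ a j + j) :
    IsHookedSkolem n a (fun i => a i + i) := by
  classical
  set D : Finset (ℕ × Bool) := (Finset.Icc 1 n) ×ˢ (Finset.univ : Finset Bool) with hD
  set f : ℕ × Bool → ℕ := fun p => if p.2 then a p.1 else a p.1 + p.1 with hf
  have hmemD : ∀ p : ℕ × Bool, p ∈ D ↔ (1 ≤ p.1 ∧ p.1 ≤ n) := by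
    intro p
    simp [hD, Finset.mem_product, Finset.mem_Icc]
  have hinj' : ∀ p ∈ D, ∀ q ∈ D, f p = f q → p = q := by
    rintro ⟨i, ci⟩ hp ⟨j, cj⟩ hq h
    rw [hmemD] at hp hq
    by_cases hij : i = j
    · subst hij
      cases ci <;> cases cj <;> simp [hf] at h ⊢ <;> omega
    · exfalso
      have h1 := hinj i j hp.1 hp.2 hq.1 hq.2 hij
      have h2 := hinj j i hq.1 hq.2 hp.1 hp.2 (Ne.symm hij)
      cases ci <;> cases cj <;> simp [hf] at h <;> omega
  have hsub : D.image f ⊆ (Finset.Icc 1 (2 * n + 1)).erase (2 * n) := by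
    intro x hx
    rw [Finset.mem_image] at hx
    obtain ⟨⟨i, c⟩, hpD, rfl⟩ := hx
    rw [hmemD] at hpD
    have hr := hrange i hpD.1 hpD.2
    rw [Finset.mem_erase, Finset.mem_Icc]
    cases c <;> simp [hf] <;> omega
  have hcardD : D.card = 2 * n := by
    rw [hD, Finset.card_product, Nat.card_Icc]
    simp
    omega
  have hcardS : ((Finset.Icc 1 (2 * n + 1)).erase (2 * n)).card = 2 * n := by
    rw [Finset.card_erase_of_mem (by rw [Finset.mem_Icc]; omega), Nat.card_Icc]
    omega
  have himg : D.image f = (Finset.Icc 1 (2 * n + 1)).erase (2 * n) := by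
    apply Finset.eq_of_subset_of_card_le hsub
    rw [hcardS, Finset.card_image_of_injOn (fun p hp q hq => hinj' p hp q hq), hcardD]
  refine ⟨fun i _ _ => rfl, ?_, ?_⟩
  · intro x
    constructor
    · intro hx
      have hxm : x ∈ D.image f := by
        rw [himg, Finset.mem_erase, Finset.mem_Icc]
        exact ⟨hx.2.2, hx.1, hx.2.1⟩
      rw [Finset.mem_image] at hxm
      obtain ⟨⟨i, c⟩, hpD, hfx⟩ := hxm
      rw [hmemD] at hpD
      refine ⟨i, hpD.1, hpD.2, ?_⟩
      cases c
      · refine Or.inr ?_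
        show x = a i + i
        simp [hf] at hfx; omega
      · refine Or.inl ?_
        simp [hf] at hfx; omega
    · rintro ⟨i, hi1, hi2, hx⟩
      have hr := hrange i hi1 hi2
      have hx' : x = a i ∨ x = a i + i := hx
      rcases hx' with rfl | rfl <;> exact ⟨by omega, by omega, by omega⟩
  · intro i j hi1 hi2 hj1 hj2 hij
    have h1 := hinj i j hi1 hi2 hj1 hj2 hij
    have h2 := hinj j i hj1 hj2 hi1 hi2 (Ne.symm hij)
    refine ⟨h1.1, ?_, ?_, ?_⟩
    · show a i ≠ a j + j
      omega
    · show a i + i ≠ a j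
      omega
    · show a i + i ≠ a j + j
      omega

/-- Necessity: the counting/parity argument. -/
private lemma hookedSkolem_necessary (n : ℕ) (a b : ℕ → ℕ) (h : IsHookedSkolem n a b) :
    n % 4 = 2 ∨ n % 4 = 3 := by
  obtain ⟨h1, h2, h3⟩ := h
  rcases Nat.eq_zero_or_pos n with rfl | hn
  · exfalso
    obtain ⟨i, hi1, hi2, -⟩ := (h2 1).mp ⟨by omega, by omega, by omega⟩
    omega
  classical
  set D : Finset (ℕ × Bool) := (Finset.Icc 1 n) ×ˢ (Finset.univ : Finset Bool) with hD
  set f : ℕ × Bool → ℕ := fun p => if p.2 then a p.1 else b p.1 with hf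
  have hmemD : ∀ p : ℕ × Bool, p ∈ D ↔ (1 ≤ p.1 ∧ p.1 ≤ n) := by
    intro p
    simp [hD, Finset.mem_product, Finset.mem_Icc]
  have hinj' : ∀ p ∈ D, ∀ q ∈ D, f p = f q → p = q := by
    rintro ⟨i, ci⟩ hp ⟨j, cj⟩ hq h
    rw [hmemD] at hp hq
    by_cases hij : i = j
    · subst hij
      have hb := h1 i hp.1 hp.2
      cases ci <;> cases cj <;> simp [hf] at h ⊢ <;> omega
    · exfalso
      have hA := h3 i j hp.1 hp.2 hq.1 hq.2 hij
      cases ci <;> cases cj <;> simp [hf] at h <;> tauto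
  have himg : D.image f = (Finset.Icc 1 (2 * n + 1)).erase (2 * n) := by
    ext x
    rw [Finset.mem_image, Finset.mem_erase, Finset.mem_Icc]
    constructor
    · rintro ⟨⟨i, c⟩, hpD, rfl⟩
      rw [hmemD] at hpD
      have hx := (h2 (f (i, c))).mpr ⟨i, hpD.1, hpD.2, by cases c <;> simp [hf]⟩
      exact ⟨hx.2.2, hx.1, hx.2.1⟩
    · intro hx
      obtain ⟨i, hi1, hi2, hc⟩ := (h2 x).mp ⟨hx.2.1, hx.2.2, hx.1⟩
      rcases hc with rfl | rfl
      · exact ⟨(i, true), by rw [hmemD]; exact ⟨hi1, hi2⟩, by simp [hf]⟩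
      · exact ⟨(i, false), by rw [hmemD]; exact ⟨hi1, hi2⟩, by simp [hf]⟩
  have hsum1 : ∑ x ∈ D.image f, x = ∑ p ∈ D, f p := Finset.sum_image hinj'
  have hsum2 : ∑ p ∈ D, f p = ∑ i ∈ Finset.Icc 1 n, (a i + b i) := by
    rw [hD, Finset.sum_product]
    refine Finset.sum_congr rfl fun i hi => ?_
    rw [Fintype.sum_bool]
    simp [hf]
  have hsum3 : ∑ i ∈ Finset.Icc 1 n, (a i + b i)
      = 2 * (∑ i ∈ Finset.Icc 1 n, a i) + ∑ i ∈ Finset.Icc 1 n, i := by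
    rw [Finset.mul_sum, ← Finset.sum_add_distrib]
    refine Finset.sum_congr rfl fun i hi => ?_
    rw [Finset.mem_Icc] at hi
    have := h1 i hi.1 hi.2
    omega
  have hS : (∑ x ∈ (Finset.Icc 1 (2 * n + 1)).erase (2 * n), x) + 2 * n
      = ∑ x ∈ Finset.Icc 1 (2 * n + 1), x := by
    exact Finset.sum_erase_add _ _ (by rw [Finset.mem_Icc]; omega)
  have g1 := gaussIcc n
  have g2 := gaussIcc (2 * n + 1)
  -- abbreviate
  obtain ⟨X, hX⟩ : ∃ X, n * n = X := ⟨_, rfl⟩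
  have e2 : 2 * ∑ i ∈ Finset.Icc 1 n, i = X + n := by rw [g1, ← hX]; ring
  have e3 : 2 * ∑ x ∈ Finset.Icc 1 (2 * n + 1), x = 4 * X + 6 * n + 2 := by
    rw [g2, ← hX]; ring
  rw [himg] at hsum1
  have key : 4 * (∑ i ∈ Finset.Icc 1 n, a i) + X + n = 4 * X + 6 * n + 2 - 4 * n := by
    omega
  have hmod : X % 4 = (n % 4) * (n % 4) % 4 := by rw [← hX, Nat.mul_mod]
  have hcases : n % 4 = 0 ∨ n % 4 = 1 ∨ n % 4 = 2 ∨ n % 4 = 3 := by omega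
  rcases hcases with hc | hc | hc | hc
  · exfalso; rw [hc] at hmod; norm_num at hmod; omega
  · exfalso; rw [hc] at hmod; norm_num at hmod; omega
  · exact Or.inl hc
  · exact Or.inr hc

/-- Construction for `n = 4m+2`, `m ≥ 1`. -/
private def aC2 (m : ℕ) : ℕ → ℕ := fun i =>
  if i = 1 then 5 * m + 2
  else if i = 2 * m + 1 then 6 * m + 4
  else if i % 2 = 1 then
    (if i ≤ 2 * m - 1 then 6 * m + 3 - (i - 1) / 2 else 6 * m + 2 - (i - 1) / 2)
  else if i = 4 * m + 2 then 2 * m + 1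
  else 2 * m + 1 - i / 2

/-- Construction for `n = 4m+3`, `m ≥ 1`. -/
private def aC3 (m : ℕ) : ℕ → ℕ := fun i =>
  if i = 1 then 7 * m + 5
  else if i = 2 * m + 5 then 6 * m + 2
  else if i % 2 = 1 then
    (if i ≤ 2 * m + 3 then 6 * m + 2 - (i - 1) / 2 else 6 * m + 3 - (i - 1) / 2)
  else if i = 4 * m + 2 then 2 * m + 1
  else 2 * m + 1 - i / 2

private lemma case2 (m : ℕ) (hm : 1 ≤ m) :
    IsHookedSkolem (4 * m + 2) (aC2 m) (fun i => aC2 m i + i) := by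
  apply hookedSkolem_of _ (by omega)
  · intro i hi1 hi2
    simp only [aC2]
    split_ifs <;> omega
  · intro i j hi1 hi2 hj1 hj2 hij
    simp only [aC2]
    split_ifs <;> omega

private lemma case3 (m : ℕ) (hm : 1 ≤ m) :
    IsHookedSkolem (4 * m + 3) (aC3 m) (fun i => aC3 m i + i) := by
  apply hookedSkolem_of _ (by omega)
  · intro i hi1 hi2
    simp only [aC3]
    split_ifs <;> omega
  · intro i j hi1 hi2 hj1 hj2 hij
    simp only [aC3]
    split_ifs <;> omega

private lemma small2 :
    IsHookedSkolem 2 (fun i => if i = 1 then 1 else 3)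
      (fun i => (if i = 1 then 1 else 3) + i) := by
  apply hookedSkolem_of _ (by omega)
  · intro i hi1 hi2
    split_ifs <;> omega
  · intro i j hi1 hi2 hj1 hj2 hij
    split_ifs <;> omega

private lemma small3 :
    IsHookedSkolem 3 (fun i => if i = 1 then 1 else if i = 2 then 3 else 4)
      (fun i => (if i = 1 then 1 else if i = 2 then 3 else 4) + i) := by
  apply hookedSkolem_of _ (by omega)
  · intro i hi1 hi2
    split_ifs <;> omega
  · intro i j hi1 hi2 hj1 hj2 hij
    split_ifs <;> omega

/-- A hooked Skolem sequence of order `n` exists if and only if `n ≡ 2, 3 (mod 4)`. -/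
theorem hookedSkolem_exists_iff (n : ℕ) :
    (∃ a b : ℕ → ℕ, IsHookedSkolem n a b) ↔ n % 4 = 2 ∨ n % 4 = 3 := by
  constructor
  · rintro ⟨a, b, h⟩
    exact hookedSkolem_necessary n a b h
  · rintro (h | h)
    · obtain ⟨q, rfl⟩ : ∃ q, n = 4 * q + 2 := ⟨n / 4, by omega⟩
      rcases Nat.eq_zero_or_pos q with rfl | hq
      · exact ⟨_, _, small2⟩
      · exact ⟨_, _, case2 q hq⟩
    · obtain ⟨q, rfl⟩ : ∃ q, n = 4 * q + 3 := ⟨n / 4, by omega⟩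
      rcases Nat.eq_zero_or_pos q with rfl | hq
      · exact ⟨_, _, small3⟩
      · exact ⟨_, _, case3 q hq⟩
end

section
/- If {(a_i,b_i) : 1 ≤ i ≤ n} is a Skolem sequence of order n, then the triples {0, a_i + n, b_i + n} (mod 6n+1) for 1 ≤ i ≤ n are base blocks of a cyclic Steiner triple system of order 6n+1; that is, the multiset of differences ±(b_i - a_i), ±(a_i + n), ±(b_i + n) covers every nonzero residue modulo 6n+1 exactly once. -/
/-- The six differences `±(b i - a i), ±(a i + n), ±(b i + n)` of the base block
`{0, a i + n, b i + n}` modulo `6n + 1`. -/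
def skolemBlockDiffs (n : ℕ) (a b : ℕ → ℕ) (i : ℕ) : Fin 6 → ZMod (6 * n + 1)
  | 0 => ((b i - a i : ℕ) : ZMod (6 * n + 1))
  | 1 => -((b i - a i : ℕ) : ZMod (6 * n + 1))
  | 2 => ((a i + n : ℕ) : ZMod (6 * n + 1))
  | 3 => -((a i + n : ℕ) : ZMod (6 * n + 1))
  | 4 => ((b i + n : ℕ) : ZMod (6 * n + 1))
  | 5 => -((b i + n : ℕ) : ZMod (6 * n + 1))

/-- From a Skolem sequence of order `n`, the triples `{0, a i + n, b i + n} (mod 6n+1)`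
are base blocks of a cyclic Steiner triple system of order `6n+1`: their differences
cover every nonzero residue modulo `6n+1` exactly once. -/
theorem skolem_gives_csts (n : ℕ) (a b : ℕ → ℕ) (h : IsSkolem n a b) :
    ∀ d : ZMod (6 * n + 1), d ≠ 0 →
      ∃! p : ℕ × Fin 6, p.1 ∈ Finset.Icc 1 n ∧ skolemBlockDiffs n a b p.1 p.2 = d := by
  classical
  obtain ⟨h1, h2, _⟩ := h
  -- bounds on a, b
  have hab : ∀ i, 1 ≤ i → i ≤ n → 1 ≤ a i ∧ a i ≤ 2 * n ∧ 1 ≤ b i ∧ b i ≤ 2 * n := by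
    intro i hi1 hi2
    have ha := (h2 (a i)).mpr ⟨i, hi1, hi2, Or.inl rfl⟩
    have hb := (h2 (b i)).mpr ⟨i, hi1, hi2, Or.inr rfl⟩
    exact ⟨ha.1, ha.2, hb.1, hb.2⟩
  have hsub : ∀ i, 1 ≤ i → i ≤ n → b i - a i = i := by
    intro i hi1 hi2
    rw [← h1 i hi1 hi2, Nat.add_sub_cancel_left]
  -- casts of 1 ≤ m ≤ 3n are nonzero
  have hcz : ∀ m : ℕ, 1 ≤ m → m ≤ 3 * n → (m : ZMod (6 * n + 1)) ≠ 0 := by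
    intro m hm1 hm2 hc
    have hlt : m < 6 * n + 1 := by omega
    have := ZMod.val_cast_of_lt hlt
    rw [hc, ZMod.val_zero] at this
    omega
  -- every block difference is nonzero
  have hmem : ∀ p : ℕ × Fin 6, p.1 ∈ Finset.Icc 1 n →
      skolemBlockDiffs n a b p.1 p.2 ≠ 0 := by
    rintro ⟨i, k⟩ hp
    rw [Finset.mem_Icc] at hp
    obtain ⟨hi1, hi2⟩ := hp
    obtain ⟨ha1, ha2, hb1, hb2⟩ := hab i hi1 hi2
    have hs := hsub i hi1 hi2
    fin_cases k <;> simp only [skolemBlockDiffs, ne_eq, neg_eq_zero]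
    · exact hcz _ (by omega) (by omega)
    · exact hcz _ (by omega) (by omega)
    · exact hcz _ (by omega) (by omega)
    · exact hcz _ (by omega) (by omega)
    · exact hcz _ (by omega) (by omega)
    · exact hcz _ (by omega) (by omega)
  -- natural-number covering of 1..3n
  have natCover : ∀ m : ℕ, 1 ≤ m → m ≤ 3 * n →
      ∃ i, 1 ≤ i ∧ i ≤ n ∧ (b i - a i = m ∨ a i + n = m ∨ b i + n = m) := by
    intro m hm1 hm2
    by_cases hmn : m ≤ n
    · exact ⟨m, hm1, hmn, Or.inl (hsub m hm1 hmn)⟩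
    · obtain ⟨i, hi1, hi2, hc⟩ := (h2 (m - n)).mp ⟨by omega, by omega⟩
      rcases hc with hc | hc
      · exact ⟨i, hi1, hi2, Or.inr (Or.inl (by omega))⟩
      · exact ⟨i, hi1, hi2, Or.inr (Or.inr (by omega))⟩
  -- surjectivity
  have hsurj : ∀ e : ZMod (6 * n + 1), e ≠ 0 →
      ∃ p : ℕ × Fin 6, p.1 ∈ Finset.Icc 1 n ∧ skolemBlockDiffs n a b p.1 p.2 = e := by
    intro e he
    have hval : ((e.val : ℕ) : ZMod (6 * n + 1)) = e := ZMod.natCast_rightInverse e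
    have hv1 : 1 ≤ e.val := by
      have := (ZMod.val_eq_zero e).not.mpr he
      omega
    have hv2 : e.val < 6 * n + 1 := ZMod.val_lt e
    by_cases hle : e.val ≤ 3 * n
    · obtain ⟨i, hi1, hi2, hc⟩ := natCover e.val hv1 hle
      rcases hc with hc | hc | hc
      · exact ⟨(i, 0), Finset.mem_Icc.mpr ⟨hi1, hi2⟩, by
          simp only [skolemBlockDiffs]; rw [hc, hval]⟩
      · exact ⟨(i, 2), Finset.mem_Icc.mpr ⟨hi1, hi2⟩, by
          simp only [skolemBlockDiffs]; rw [hc, hval]⟩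
      · exact ⟨(i, 4), Finset.mem_Icc.mpr ⟨hi1, hi2⟩, by
          simp only [skolemBlockDiffs]; rw [hc, hval]⟩
    · set m : ℕ := 6 * n + 1 - e.val with hm
      have hmc : ((m : ℕ) : ZMod (6 * n + 1)) = -e := by
        rw [hm, Nat.cast_sub (le_of_lt hv2), ZMod.natCast_self, hval, zero_sub]
      obtain ⟨i, hi1, hi2, hc⟩ := natCover m (by omega) (by omega)
      rcases hc with hc | hc | hc
      · exact ⟨(i, 1), Finset.mem_Icc.mpr ⟨hi1, hi2⟩, by
          simp only [skolemBlockDiffs]; rw [hc, hmc, neg_neg]⟩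
      · exact ⟨(i, 3), Finset.mem_Icc.mpr ⟨hi1, hi2⟩, by
          simp only [skolemBlockDiffs]; rw [hc, hmc, neg_neg]⟩
      · exact ⟨(i, 5), Finset.mem_Icc.mpr ⟨hi1, hi2⟩, by
          simp only [skolemBlockDiffs]; rw [hc, hmc, neg_neg]⟩
  -- cardinality argument for injectivity
  set S : Finset (ℕ × Fin 6) := Finset.Icc 1 n ×ˢ Finset.univ with hS
  set T : Finset (ZMod (6 * n + 1)) := Finset.univ.erase 0 with hT
  have hScard : S.card = 6 * n := by
    rw [hS, Finset.card_product, Nat.card_Icc]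
    simp
    ring
  have hTcard : T.card = 6 * n := by
    rw [hT, Finset.card_erase_of_mem (Finset.mem_univ 0), Finset.card_univ, ZMod.card]
    omega
  have hinj := Finset.inj_on_of_surj_on_of_card_le (s := S) (t := T)
    (fun p _ => skolemBlockDiffs n a b p.1 p.2)
    (fun p hp => Finset.mem_erase.mpr
      ⟨hmem p (Finset.mem_product.mp hp).1, Finset.mem_univ _⟩)
    (fun e he => by
      obtain ⟨p, hp1, hp2⟩ := hsurj e (Finset.mem_erase.mp he).1
      exact ⟨p, Finset.mem_product.mpr ⟨hp1, Finset.mem_univ _⟩, hp2⟩)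
    (by omega)
  intro d hd
  obtain ⟨p, hp1, hp2⟩ := hsurj d hd
  refine ⟨p, ⟨hp1, hp2⟩, ?_⟩
  rintro q ⟨hq1, hq2⟩
  exact hinj (Finset.mem_product.mpr ⟨hq1, Finset.mem_univ _⟩)
    (Finset.mem_product.mpr ⟨hp1, Finset.mem_univ _⟩) (hq2.trans hp2.symm)
end

section
/- If a Langford sequence of defect d and order n exists (a partition of {1,...,2n} into pairs (a_i,b_i) with differences b_i - a_i taking each value in {d, d+1, ..., d+n-1} exactly once), then n ≥ 2d - 1. -/
/-- A Langford sequence of defect `d` and order `n` in pair form: a partition of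
`{1,...,2n}` into pairs `(a k, b k)`, `d ≤ k ≤ d + n - 1`, with `b k - a k = k`. -/
def IsLangford (d n : ℕ) (a b : ℕ → ℕ) : Prop :=
  (∀ k, d ≤ k → k ≤ d + n - 1 → a k + k = b k) ∧
  (∀ x, (1 ≤ x ∧ x ≤ 2 * n) ↔ ∃ k, d ≤ k ∧ k ≤ d + n - 1 ∧ (x = a k ∨ x = b k)) ∧
  (∀ k l, d ≤ k → k ≤ d + n - 1 → d ≤ l → l ≤ d + n - 1 → k ≠ l →
    a k ≠ a l ∧ a k ≠ b l ∧ b k ≠ a l ∧ b k ≠ b l)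

/-- Sum of a finset of positive naturals is at least `1 + 2 + ⋯ + card`. -/
lemma sum_range_card_le (S : Finset ℕ) (h0 : 0 ∉ S) :
    ∑ i ∈ Finset.range S.card, (i + 1) ≤ ∑ x ∈ S, x := by
  induction S using Finset.strongInduction with
  | _ S ih =>
    rcases S.eq_empty_or_nonempty with rfl | hne
    · simp
    · have h0' := h0
      set m := S.max' hne with hm
      have hmS : m ∈ S := S.max'_mem hne
      have hsub : S ⊆ Finset.Icc 1 m := by
        intro x hx
        rw [Finset.mem_Icc]
        exact ⟨Nat.one_le_iff_ne_zero.mpr (fun hx0 => h0 (hx0 ▸ hx)), S.le_max' x hx⟩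
      have hcard : S.card ≤ m := by
        have := Finset.card_le_card hsub
        simpa using this
      have hcpos : 1 ≤ S.card := Finset.card_pos.mpr hne
      have herase : (S.erase m).card = S.card - 1 := Finset.card_erase_of_mem hmS
      have hstep := ih (S.erase m) (Finset.erase_ssubset hmS)
        (fun h => h0 (Finset.mem_of_mem_erase h))
      rw [herase] at hstep
      have hsum : ∑ x ∈ S, x = m + ∑ x ∈ S.erase m, x :=
        (Finset.add_sum_erase S id hmS).symm
      have hr : S.card = (S.card - 1) + 1 := by omega
      rw [hr, Finset.sum_range_succ]
      omega

/-- If a Langford sequence of defect `d` and order `n` exists, then `n ≥ 2d - 1`. -/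
theorem langford_order_bound (d n : ℕ) (hd : 1 ≤ d) (hn : 1 ≤ n)
    (a b : ℕ → ℕ) (h : IsLangford d n a b) : 2 * d - 1 ≤ n := by
  obtain ⟨h1, h2, h3⟩ := h
  set I : Finset ℕ := Finset.Icc d (d + n - 1) with hI
  have hmemI : ∀ k, k ∈ I ↔ (d ≤ k ∧ k ≤ d + n - 1) := by
    intro k; simp [hI, Finset.mem_Icc]
  have hcard : I.card = n := by
    rw [hI, Nat.card_Icc]; omega
  -- injectivity on I
  have hainj : ∀ k ∈ I, ∀ l ∈ I, a k = a l → k = l := by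
    intro k hk l hl hkl
    by_contra hne
    exact ((h3 k l ((hmemI k).mp hk).1 ((hmemI k).mp hk).2
      ((hmemI l).mp hl).1 ((hmemI l).mp hl).2 hne).1) hkl
  have hbinj : ∀ k ∈ I, ∀ l ∈ I, b k = b l → k = l := by
    intro k hk l hl hkl
    by_contra hne
    exact ((h3 k l ((hmemI k).mp hk).1 ((hmemI k).mp hk).2
      ((hmemI l).mp hl).1 ((hmemI l).mp hl).2 hne).2.2.2) hkl
  -- the union of images is Icc 1 (2n)
  have hunion : I.image a ∪ I.image b = Finset.Icc 1 (2 * n) := by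
    ext x
    simp only [Finset.mem_union, Finset.mem_image, Finset.mem_Icc, hmemI]
    rw [h2 x]
    constructor
    · rintro (⟨k, hk, rfl⟩ | ⟨k, hk, rfl⟩)
      · exact ⟨k, hk.1, hk.2, Or.inl rfl⟩
      · exact ⟨k, hk.1, hk.2, Or.inr rfl⟩
    · rintro ⟨k, hk1, hk2, (rfl | rfl)⟩
      · exact Or.inl ⟨k, ⟨hk1, hk2⟩, rfl⟩
      · exact Or.inr ⟨k, ⟨hk1, hk2⟩, rfl⟩
  have hdisj : Disjoint (I.image a) (I.image b) := by
    rw [Finset.disjoint_left]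
    rintro x hx1 hx2
    obtain ⟨k, hk, rfl⟩ := Finset.mem_image.mp hx1
    obtain ⟨l, hl, hlb⟩ := Finset.mem_image.mp hx2
    rcases eq_or_ne k l with rfl | hne
    · have := h1 k ((hmemI k).mp hk).1 ((hmemI k).mp hk).2
      have hdk : 1 ≤ k := le_trans hd ((hmemI k).mp hk).1
      omega
    · exact (h3 k l ((hmemI k).mp hk).1 ((hmemI k).mp hk).2
        ((hmemI l).mp hl).1 ((hmemI l).mp hl).2 hne).2.1 hlb.symm
  -- sums
  have hsuma : ∑ x ∈ I.image a, x = ∑ k ∈ I, a k := Finset.sum_image hainj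
  have hsumb : ∑ x ∈ I.image b, x = ∑ k ∈ I, b k := Finset.sum_image hbinj
  have hT : ∑ x ∈ Finset.Icc 1 (2 * n), x = ∑ k ∈ I, a k + ∑ k ∈ I, b k := by
    rw [← hunion, Finset.sum_union hdisj, hsuma, hsumb]
  have hb_eq : ∑ k ∈ I, b k = ∑ k ∈ I, a k + ∑ k ∈ I, k := by
    rw [← Finset.sum_add_distrib]
    exact Finset.sum_congr rfl (fun k hk =>
      (h1 k ((hmemI k).mp hk).1 ((hmemI k).mp hk).2).symm)
  -- lower bound on ∑ a
  have hA0 : (0 : ℕ) ∉ I.image a := by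
    intro hx
    have hx' : (0 : ℕ) ∈ Finset.Icc 1 (2 * n) := by
      rw [← hunion]; exact Finset.mem_union_left _ hx
    simp at hx'
  have hAcard : (I.image a).card = n := by
    rw [Finset.card_image_of_injOn (fun k hk l hl => hainj k hk l hl), hcard]
  have hA_lb := sum_range_card_le (I.image a) hA0
  rw [hAcard] at hA_lb
  rw [hsuma] at hA_lb
  -- compute ∑ k ∈ I, k
  have hK : ∑ k ∈ I, k = n * d + ∑ i ∈ Finset.range n, i := by
    have hIco : I = Finset.Ico d (d + n) := by
      rw [hI]; ext x; simp only [Finset.mem_Icc, Finset.mem_Ico]; omega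
    rw [hIco, Finset.sum_Ico_eq_sum_range]
    simp only [Nat.add_sub_cancel_left]
    rw [Finset.sum_add_distrib, Finset.sum_const, Finset.card_range, smul_eq_mul]
  -- Gauss sums
  have hR2 : (∑ i ∈ Finset.range n, i) * 2 = n * (n - 1) := Finset.sum_range_id_mul_two n
  have hT2 : (∑ x ∈ Finset.Icc 1 (2 * n), x) * 2 = (2 * n + 1) * (2 * n) := by
    have hins : Finset.range (2 * n + 1) = insert 0 (Finset.Icc 1 (2 * n)) := by
      ext x; simp only [Finset.mem_range, Finset.mem_insert, Finset.mem_Icc]; omega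
    have h0 : (0 : ℕ) ∉ Finset.Icc 1 (2 * n) := by simp
    have hg := Finset.sum_range_id_mul_two (2 * n + 1)
    rw [hins, Finset.sum_insert h0, zero_add] at hg
    simpa using hg
  -- put it together
  set A := ∑ k ∈ I, a k
  set R := ∑ i ∈ Finset.range n, i
  set T := ∑ x ∈ Finset.Icc 1 (2 * n), x
  have hA_lb' : R + n ≤ A := by
    have : ∑ i ∈ Finset.range n, (i + 1) = R + n := by
      simp [Finset.sum_add_distrib]
      rfl
    omega
  have hTeq : T = 2 * A + (n * d + R) := by
    rw [hT, hb_eq, hK]; ring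
  clear_value A R T
  obtain ⟨m, rfl⟩ : ∃ m, n = m + 1 := ⟨n - 1, by omega⟩
  simp only [Nat.add_sub_cancel] at hR2
  have hkey : (m + 1) * (2 * d) ≤ (m + 1) * (m + 1 + 1) := by nlinarith
  have : 2 * d ≤ m + 1 + 1 := Nat.le_of_mul_le_mul_left hkey (by omega)
  omega
end
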